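/- Let q be a positive integer and let p≥2 be an integer. Then (1−(−1)^q)·Σ_{i+j=p−1, i,j≥0} C(p+i−1,i)C(q+j−1,j)·T(p+i,q+j) = Σ_{i+j=q−1, i,j≥0} (−1)^j·C(p+i−1,i)C(p+j−1,j)·T(p+i)·T(p+j). In particular, when q is even the right-hand side vanishes. -/

import Mathlib

open scoped BigOperators
open MeasureTheory

/-- Multiple polylogarithm `Li_k(z) = Σ_{n₁>⋯>n_r>0} z^{n₁}/(n₁^{k₁}⋯n_r^{k_r})`. -/
noncomputable def MPL (k : List ℕ) (z : ℝ) : ℝ :=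
  if h : 0 < k.length then
    ∑' n : {n : Fin k.length → ℕ // StrictAnti n ∧ ∀ i, 0 < n i},
      z ^ (n.1 ⟨0, h⟩) / ∏ i, (n.1 i : ℝ) ^ k.get i
  else 1

/-- Level-two multiple polylogarithm
`A(k;x) = 2^r Σ_{n₁>⋯>n_r>0, n_j ≡ r+1-j (mod 2)} x^{n₁}/(n₁^{k₁}⋯n_r^{k_r})`. -/
noncomputable def AFn (k : List ℕ) (x : ℝ) : ℝ :=
  if h : 0 < k.length then
    2 ^ k.length *
      ∑' n : {n : Fin k.length → ℕ //
          StrictAnti n ∧ (∀ i, 0 < n i) ∧ ∀ i, n i % 2 = (k.length - i.val) % 2},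
        x ^ (n.1 ⟨0, h⟩) / ∏ i, (n.1 i : ℝ) ^ k.get i
  else 1

/-- Multiple zeta value `ζ(k) = Σ_{n₁>⋯>n_r>0} ∏ 1/n_i^{k_i}`. -/
noncomputable def MZV (k : List ℕ) : ℝ :=
  ∑' n : {n : Fin k.length → ℕ // StrictAnti n ∧ ∀ i, 0 < n i},
    ∏ i, 1 / (n.1 i : ℝ) ^ k.get i

/-- Multiple zeta star value `ζ⋆(k) = Σ_{n₁≥⋯≥n_r>0} ∏ 1/n_i^{k_i}`. -/
noncomputable def MZSV (k : List ℕ) : ℝ :=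
  ∑' n : {n : Fin k.length → ℕ // Antitone n ∧ ∀ i, 0 < n i},
    ∏ i, 1 / (n.1 i : ℝ) ^ k.get i

/-- Multiple T-value `T(k) = 2^r Σ_{n₁>⋯>n_r>0, n_j ≡ r+1-j (mod 2)} ∏ 1/n_i^{k_i}`. -/
noncomputable def MTV (k : List ℕ) : ℝ :=
  2 ^ k.length *
    ∑' n : {n : Fin k.length → ℕ //
        StrictAnti n ∧ (∀ i, 0 < n i) ∧ ∀ i, n i % 2 = (k.length - i.val) % 2},
      ∏ i, 1 / (n.1 i : ℝ) ^ k.get i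

/-- Hurwitz-type multiple zeta value `ζ(k;α) = Σ_{n₁>⋯>n_r>0} ∏ (n_i+α-1)^{-k_i}`. -/
noncomputable def HMZV (k : List ℕ) (α : ℂ) : ℂ :=
  ∑' n : {n : Fin k.length → ℕ // StrictAnti n ∧ ∀ i, 0 < n i},
    ∏ i, ((n.1 i : ℂ) + α - 1) ^ (-(k.get i : ℤ))

/-- Hurwitz-type multiple zeta star value `ζ⋆(k;α) = Σ_{n₁≥⋯≥n_r>0} ∏ (n_i+α-1)^{-k_i}`. -/
noncomputable def HMZSV (k : List ℕ) (α : ℂ) : ℂ :=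
  ∑' n : {n : Fin k.length → ℕ // Antitone n ∧ ∀ i, 0 < n i},
    ∏ i, ((n.1 i : ℂ) + α - 1) ^ (-(k.get i : ℤ))

/-- Hurwitz-type multiple T-value
`T(k;α) = Σ_{m₁>⋯>m_r>0} 2^r ∏_i (2m_i - r - 2 + i + α)^{-k_i}` (1-indexed `i`). -/
noncomputable def HMTV (k : List ℕ) (α : ℂ) : ℂ :=
  ∑' n : {n : Fin k.length → ℕ // StrictAnti n ∧ ∀ i, 0 < n i},
    2 ^ k.length *
      ∏ i, (2 * (n.1 i : ℂ) - (k.length : ℂ) - 1 + (i.val : ℂ) + α) ^ (-(k.get i : ℤ))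

/-- The boolean word (sequence of bits between consecutive units) of a composition. -/
def toWord : List ℕ → List Bool
  | [] => []
  | [a] => List.replicate (a - 1) false
  | a :: b :: rest => List.replicate (a - 1) false ++ true :: toWord (b :: rest)

/-- The composition corresponding to a boolean word. -/
def fromWord : List Bool → List ℕ
  | [] => [1]
  | false :: w =>
    match fromWord w with
    | [] => [1]
    | a :: t => (a + 1) :: t
  | true :: w => 1 :: fromWord w

/-- Hoffman dual of a composition: swap commas and plus signs in
`k = (1+⋯+1, …, 1+⋯+1)`. -/
def HDual (k : List ℕ) : List ℕ := fromWord ((toWord k).map fun b => !b)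

/-- `k₊ = (k₁+1, k₂, …, k_r)`. -/
def plusOne : List ℕ → List ℕ
  | [] => []
  | a :: t => (a + 1) :: t

/-- `Refines l k` means the composition `k` can be obtained from `l`
by combining some consecutive parts of `l`, i.e. `l ⪰ k`. -/
inductive Refines : List ℕ → List ℕ → Prop
  | nil : Refines [] []
  | cons (b l k : List ℕ) : b ≠ [] → Refines l k → Refines (b ++ l) (b.sum :: k)

/-- Arakawa–Kaneko zeta function `ξ(s;k) = (1/Γ(s)) ∫_0^∞ t^{s-1}/(e^t-1) Li_k(1-e^{-t}) dt`. -/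
noncomputable def xiAK (s : ℂ) (k : List ℕ) : ℂ :=
  (1 / Complex.Gamma s) *
    ∫ t in Set.Ioi (0 : ℝ),
      (t : ℂ) ^ (s - 1) / ((Real.exp t : ℂ) - 1) * (MPL k (1 - Real.exp (-t)) : ℂ)

/-- Kaneko–Tsumura η-function `η(s;k) = (1/Γ(s)) ∫_0^∞ t^{s-1}/(1-e^t) Li_k(1-e^{t}) dt`. -/
noncomputable def etaKT (s : ℂ) (k : List ℕ) : ℂ :=
  (1 / Complex.Gamma s) *
    ∫ t in Set.Ioi (0 : ℝ),
      (t : ℂ) ^ (s - 1) / (1 - (Real.exp t : ℂ)) * (MPL k (1 - Real.exp t) : ℂ)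

/-- Kaneko–Tsumura ψ-function `ψ(s;k) = (1/Γ(s)) ∫_0^∞ t^{s-1} A(k; tanh(t/2))/sinh(t) dt`. -/
noncomputable def psiKT (s : ℂ) (k : List ℕ) : ℂ :=
  (1 / Complex.Gamma s) *
    ∫ t in Set.Ioi (0 : ℝ),
      (t : ℂ) ^ (s - 1) * ((AFn k (Real.tanh (t / 2)) / Real.sinh t : ℝ) : ℂ)

/-- Riemann zeta value `ζ(a) = Σ_{n>0} 1/n^a`. -/
noncomputable def zeta1 (a : ℕ) : ℝ := ∑' n : {n : ℕ // 0 < n}, 1 / (n.1 : ℝ) ^ a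

/-- Double zeta value `ζ(a,b) = Σ_{n₁>n₂>0} 1/(n₁^a n₂^b)`. -/
noncomputable def zeta2 (a b : ℕ) : ℝ :=
  ∑' p : {p : ℕ × ℕ // p.2 < p.1 ∧ 0 < p.2}, 1 / ((p.1.1 : ℝ) ^ a * (p.1.2 : ℝ) ^ b)

/-- Single T-value `T(a) = 2 Σ_{n>0 odd} 1/n^a`. -/
noncomputable def T1 (a : ℕ) : ℝ := 2 * ∑' n : {n : ℕ // 0 < n ∧ n % 2 = 1}, 1 / (n.1 : ℝ) ^ a

/-- Double T-value `T(a,b) = 4 Σ_{n₁>n₂>0, n₁ even, n₂ odd} 1/(n₁^a n₂^b)`. -/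
noncomputable def T2 (a b : ℕ) : ℝ :=
  4 * ∑' p : {p : ℕ × ℕ // p.2 < p.1 ∧ 0 < p.2 ∧ p.1 % 2 = 0 ∧ p.2 % 2 = 1},
    1 / ((p.1.1 : ℝ) ^ a * (p.1.2 : ℝ) ^ b)



open Finset

/-- Alternating difference of binomial coefficients (finite difference of `C(·,s)`). -/
lemma lemC : ∀ (M : ℕ), ∀ (R s : ℕ), M ≤ R →
    ∑ j ∈ Finset.range (M+1), (-1:ℤ)^j * (M.choose j) * ((R-j).choose s) =
      if M ≤ s then ((R-M).choose (s-M) : ℤ) else 0 := by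
  intro M
  induction M with
  | zero => intro R s _; simp
  | succ M ih =>
    intro R s hMR
    have hR1 : M ≤ R - 1 := by omega
    have hMR' : M ≤ R := by omega
    have key : ∑ j ∈ Finset.range (M+2), (-1:ℤ)^j * ((M+1).choose j) * ((R-j).choose s)
        = (∑ j ∈ Finset.range (M+1), (-1:ℤ)^j * (M.choose j) * ((R-j).choose s))
          - ∑ j ∈ Finset.range (M+1), (-1:ℤ)^j * (M.choose j) * ((R-1-j).choose s) := by
      rw [Finset.sum_range_succ' (fun j => (-1:ℤ)^j * ((M+1).choose j) * ((R-j).choose s)) (M+1)]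
      have expand : ∀ j ∈ Finset.range (M+1),
          (-1:ℤ)^(j+1) * ((M+1).choose (j+1)) * ((R-(j+1)).choose s)
            = (-1:ℤ)^(j+1) * (M.choose (j+1)) * ((R-(j+1)).choose s)
              - (-1:ℤ)^j * (M.choose j) * ((R-1-j).choose s) := by
        intro j _
        have : (M+1).choose (j+1) = M.choose j + M.choose (j+1) := Nat.choose_succ_succ M j
        have hsub : R - (j+1) = R - 1 - j := by omega
        rw [this, hsub]
        push_cast
        ring
      rw [Finset.sum_congr rfl expand, Finset.sum_sub_distrib]
      have reassemble : (∑ j ∈ Finset.range (M+1),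
            (-1:ℤ)^(j+1) * (M.choose (j+1)) * ((R-(j+1)).choose s))
          + (-1:ℤ)^0 * ((M+1).choose 0) * ((R-0).choose s)
          = ∑ j ∈ Finset.range (M+1), (-1:ℤ)^j * (M.choose j) * ((R-j).choose s) := by
        have : ∑ j ∈ Finset.range (M+2), (-1:ℤ)^j * (M.choose j) * ((R-j).choose s)
            = ∑ j ∈ Finset.range (M+1), (-1:ℤ)^j * (M.choose j) * ((R-j).choose s) := by
          rw [Finset.sum_range_succ]
          simp [Nat.choose_succ_self]
        rw [← this, Finset.sum_range_succ' (fun j => (-1:ℤ)^j * (M.choose j) * ((R-j).choose s)) (M+1)]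
        simp
      linarith [reassemble]
    rw [key, ih R s hMR', ih (R-1) s hR1]
    by_cases h1 : M + 1 ≤ s
    · have h0 : M ≤ s := by omega
      simp only [if_pos h1, if_pos h0]
      have e1 : R - M = (R - (M+1)) + 1 := by omega
      have e2 : s - M = (s - (M+1)) + 1 := by omega
      have e3 : R - 1 - M = R - (M+1) := by omega
      rw [e1, e2, e3, Nat.choose_succ_succ]
      push_cast
      ring_nf
      simp [Nat.succ_eq_add_one, Nat.add_comm]
    · by_cases h0 : M ≤ s
      · have hMs : M = s := by omega
        simp [if_neg h1, if_pos h0, hMs]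
      · simp [if_neg h1, if_neg h0]
        exact fun h => absurd h (by omega)

/-- The key alternating binomial identity. -/
lemma lemB (p q A : ℕ) (hp : 2 ≤ p) (hq : 1 ≤ q) (hA1 : p ≤ A) (hA2 : A ≤ 2*p+q-2) :
    ∑ j ∈ Finset.range q, (-1:ℤ)^j * ((p+q-2-j).choose (q-1-j)) * ((p+j-1).choose j)
        * ((A-1).choose (p+j-1))
      = if A ≤ 2*p-1 then ((A-1).choose (A-p)) * ((q+2*p-2-A).choose (2*p-1-A)) else 0 := by
  have step1 : ∀ j ∈ Finset.range q,
      (-1:ℤ)^j * ((p+q-2-j).choose (q-1-j)) * ((p+j-1).choose j) * ((A-1).choose (p+j-1))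
        = ((A-1).choose (p-1) : ℤ) * ((-1:ℤ)^j * ((A-p).choose j) * ((p+q-2-j).choose (p-1))) := by
    intro j hj
    rw [Finset.mem_range] at hj
    rw [Nat.choose_symm_of_eq_add (by omega : p+q-2-j = (q-1-j) + (p-1))]
    rw [Nat.choose_symm_of_eq_add (by omega : p+j-1 = j + (p-1))]
    have h3 : ((p+j-1).choose (p-1)) * ((A-1).choose (p+j-1))
        = ((A-1).choose (p-1)) * ((A-p).choose j) := by
      by_cases hle : p+j-1 ≤ A-1
      · have := Nat.choose_mul (n := A-1) (k := p+j-1) (s := p-1) (by omega)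
        rw [Nat.mul_comm]
        rw [this]
        congr 1
        congr 1 <;> omega
      · rw [Nat.choose_eq_zero_of_lt (by omega : A-1 < p+j-1),
            Nat.choose_eq_zero_of_lt (by omega : A-p < j)]
        ring
    have h3' : (((p+j-1).choose (p-1)) : ℤ) * ((A-1).choose (p+j-1))
        = ((A-1).choose (p-1) : ℤ) * ((A-p).choose j) := by exact_mod_cast congrArg (Nat.cast (R := ℤ)) h3
    linear_combination ((-1:ℤ)^j * ((p+q-2-j).choose (p-1) : ℤ)) * h3'
  rw [Finset.sum_congr rfl step1, ← Finset.mul_sum]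
  set M := A - p with hM
  set R := p + q - 2 with hR
  set s := p - 1 with hs
  have hMR : M ≤ R := by omega
  have ext : ∑ j ∈ Finset.range q, (-1:ℤ)^j * ((A-p).choose j) * ((p+q-2-j).choose (p-1))
      = ∑ j ∈ Finset.range (M+1), (-1:ℤ)^j * (M.choose j) * ((R-j).choose s) := by
    have h1 : ∑ j ∈ Finset.range q, (-1:ℤ)^j * (M.choose j) * ((R-j).choose s)
        = ∑ j ∈ Finset.range (max q (M+1)), (-1:ℤ)^j * (M.choose j) * ((R-j).choose s) := by
      apply Finset.sum_subset (Finset.range_subset_range.2 (le_max_left _ _))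
      intro j _ hj
      rw [Finset.mem_range, not_lt] at hj
      have : (R - j).choose s = 0 := Nat.choose_eq_zero_of_lt (by omega)
      simp [this]
    have h2 : ∑ j ∈ Finset.range (M+1), (-1:ℤ)^j * (M.choose j) * ((R-j).choose s)
        = ∑ j ∈ Finset.range (max q (M+1)), (-1:ℤ)^j * (M.choose j) * ((R-j).choose s) := by
      apply Finset.sum_subset (Finset.range_subset_range.2 (le_max_right _ _))
      intro j _ hj
      rw [Finset.mem_range, not_lt] at hj
      have : M.choose j = 0 := Nat.choose_eq_zero_of_lt (by omega)
      simp [this]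
    rw [h1, ← h2]
  rw [ext, lemC M R s hMR]
  by_cases hb : A ≤ 2*p-1
  · have hMs : M ≤ s := by omega
    rw [if_pos hMs, if_pos hb]
    have e1 : R - M = q + 2*p - 2 - A := by omega
    have e2 : s - M = 2*p - 1 - A := by omega
    have e3 : (A-1).choose (p-1) = (A-1).choose (A-p) :=
      Nat.choose_symm_of_eq_add (by omega : A - 1 = (p-1) + (A-p))
    rw [e1, e2, e3]
    push_cast
    ring
  · have hMs : ¬ M ≤ s := by omega
    rw [if_neg hMs, if_neg hb, mul_zero]
    simp

lemma auxTel (v : ℝ) (a' : ℕ) : ∀ b' : ℕ,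
    ∑ j ∈ Finset.range (b'+1), ((a'+j).choose j : ℝ) * v^j
      - (1-v) * ∑ j ∈ Finset.range (b'+1), ((a'+1+j).choose j : ℝ) * v^j
    = ((a'+b'+1).choose b' : ℝ) * v^(b'+1) := by
  intro b'
  induction b' with
  | zero => simp
  | succ b' ih =>
    rw [Finset.sum_range_succ, Finset.sum_range_succ
        (fun j => ((a'+1+j).choose j : ℝ) * v^j) (b'+1)]
    have e1 : a' + (b'+1) = a'+b'+1 := by ring
    have e2 : a'+1+(b'+1) = a'+b'+1+1 := by ring
    rw [e1, e2]
    have hP : ((a'+b'+1+1).choose (b'+1) : ℝ)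
        = ((a'+b'+1).choose b' : ℝ) + ((a'+b'+1).choose (b'+1) : ℝ) := by
      rw [Nat.choose_succ_succ']
      push_cast; ring
    rw [hP]
    linear_combination ih

/-- Partial fraction identity in polynomial form: for `u + v = 1`. -/
lemma lemPF : ∀ a b : ℕ, 1 ≤ a → 1 ≤ b → ∀ u v : ℝ, u + v = 1 →
    ∑ i ∈ Finset.range a, ((b-1+i).choose i : ℝ) * u^i * v^b
      + ∑ j ∈ Finset.range b, ((a-1+j).choose j : ℝ) * u^a * v^j = 1 := by
  intro a
  induction a with
  | zero => omega
  | succ a iha =>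
    intro b _ hb u v huv
    rcases Nat.eq_zero_or_pos a with rfl | ha
    · -- base case a = 1
      have hfirst : ∑ i ∈ Finset.range (0+1), ((b-1+i).choose i : ℝ) * u^i * v^b = v^b := by
        simp
      have hsecond : ∑ j ∈ Finset.range b, ((0+1-1+j).choose j : ℝ) * u^(0+1) * v^j
          = u * ∑ j ∈ Finset.range b, v^j := by
        rw [Finset.mul_sum]
        apply Finset.sum_congr rfl
        intro j _
        simp [Nat.choose_self, pow_one]
      rw [hfirst, hsecond]
      have hg := geom_sum_mul v b
      have hu : u = -(v-1) := by linarith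
      linear_combination (-1 : ℝ) * hg + (∑ i ∈ Finset.range b, v ^ i) * hu
    · -- inductive step
      obtain ⟨a', rfl⟩ : ∃ a', a = a' + 1 := ⟨a-1, by omega⟩
      obtain ⟨b', rfl⟩ : ∃ b', b = b' + 1 := ⟨b-1, by omega⟩
      have IH := iha (b'+1) (by omega) (by omega) u v huv
      have AT := auxTel v a' b'
      have hu : u = 1 - v := by linarith
      have key2 : ∑ j ∈ Finset.range (b'+1), ((a'+1+1-1+j).choose j : ℝ) * u^(a'+1+1) * v^j
          = ∑ j ∈ Finset.range (b'+1), ((a'+1-1+j).choose j : ℝ) * u^(a'+1) * v^j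
            - ((a'+b'+1).choose b' : ℝ) * u^(a'+1) * v^(b'+1) := by
        have e : ∀ j ∈ Finset.range (b'+1),
            ((a'+1+1-1+j).choose j : ℝ) * u^(a'+1+1) * v^j
              = u^(a'+1) * ((1-v) * (((a'+1+j).choose j : ℝ) * v^j)) := by
          intro j _
          have h1 : a'+1+1-1+j = a'+1+j := by omega
          have h2 : u^(a'+1+1) = u^(a'+1) * (1-v) := by rw [pow_succ, ← hu]
          rw [h1, h2]; ring
        have e2 : ∀ j ∈ Finset.range (b'+1),
            ((a'+1-1+j).choose j : ℝ) * u^(a'+1) * v^j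
              = u^(a'+1) * (((a'+j).choose j : ℝ) * v^j) := by
          intro j _
          have h1 : a'+1-1+j = a'+j := by omega
          rw [h1]; ring
        rw [Finset.sum_congr rfl e, ← Finset.mul_sum,
            Finset.sum_congr rfl e2, ← Finset.mul_sum, ← Finset.mul_sum]
        linear_combination (-(u^(a'+1))) * AT
      rw [key2]
      rw [Finset.sum_range_succ (fun i => ((b'+1-1+i).choose i : ℝ) * u^i * v^(b'+1)) (a'+1)]
      have symm : ((b'+1-1+(a'+1)).choose (a'+1) : ℝ) = ((a'+b'+1).choose b' : ℝ) := by
        rw [show b'+1-1+(a'+1) = a'+b'+1 from by omega,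
          Nat.choose_symm_of_eq_add (show a'+b'+1 = (a'+1)+b' from by omega)]
      rw [symm]
      have IH' : ∑ i ∈ Finset.range (a'+1), ((b'+1-1+i).choose i : ℝ) * u^i * v^(b'+1)
          + ∑ j ∈ Finset.range (b'+1), ((a'+1-1+j).choose j : ℝ) * u^(a'+1) * v^j = 1 := IH
      linarith [IH']

lemma myInvPowSub {w : ℝ} (hw : w ≠ 0) {m k : ℕ} (hk : k ≤ m) :
    w⁻¹^(m-k) = w^k * w⁻¹^m := by
  have h1 : w^k * w⁻¹^m = w^k * (w⁻¹^k * w⁻¹^(m-k)) := by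
    rw [← pow_add]
    congr 2
    omega
  have h2 : w^k * w⁻¹^k = 1 := by
    rw [← mul_pow, mul_inv_cancel₀ hw, one_pow]
  rw [h1, ← mul_assoc, h2, one_mul]

/-- Partial fraction decomposition of `x⁻ᵃ y⁻ᵇ`. -/
lemma lemPFreal (a b : ℕ) (ha : 1 ≤ a) (hb : 1 ≤ b) (x y : ℝ) (hx : 0 < x) (hy : 0 < y) :
    x⁻¹^a * y⁻¹^b
      = ∑ i ∈ Finset.range a, ((b-1+i).choose i : ℝ) * (x⁻¹^(a-i) * (x+y)⁻¹^(b+i))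
        + ∑ j ∈ Finset.range b, ((a-1+j).choose j : ℝ) * (y⁻¹^(b-j) * (x+y)⁻¹^(a+j)) := by
  have hz : (0:ℝ) < x + y := by linarith
  have hx' : x ≠ 0 := ne_of_gt hx
  have hy' : y ≠ 0 := ne_of_gt hy
  have hz' : x + y ≠ 0 := ne_of_gt hz
  have huv : x/(x+y) + y/(x+y) = 1 := by field_simp
  have H := lemPF a b ha hb (x/(x+y)) (y/(x+y)) huv
  have step : x⁻¹^a * y⁻¹^b
      = (∑ i ∈ Finset.range a, ((b-1+i).choose i : ℝ) * (x/(x+y))^i * (y/(x+y))^b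
          + ∑ j ∈ Finset.range b, ((a-1+j).choose j : ℝ) * (x/(x+y))^a * (y/(x+y))^j)
        * (x⁻¹^a * y⁻¹^b) := by
    rw [H, one_mul]
  rw [step, add_mul, Finset.sum_mul, Finset.sum_mul]
  congr 1
  · apply Finset.sum_congr rfl
    intro i hi
    rw [Finset.mem_range] at hi
    rw [myInvPowSub hx' (by omega : i ≤ a)]
    simp only [div_pow, div_eq_mul_inv, ← inv_pow]
    have e4 : y^b * y⁻¹^b = 1 := by rw [← mul_pow, mul_inv_cancel₀ hy', one_pow]
    linear_combination (((b-1+i).choose i : ℝ) * x^i * (x+y)⁻¹^(b+i) * x⁻¹^a) * e4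
  · apply Finset.sum_congr rfl
    intro j hj
    rw [Finset.mem_range] at hj
    rw [myInvPowSub hy' (by omega : j ≤ b)]
    simp only [div_pow, div_eq_mul_inv, ← inv_pow]
    have e4 : x^a * x⁻¹^a = 1 := by rw [← mul_pow, mul_inv_cancel₀ hx', one_pow]
    linear_combination (((a-1+j).choose j : ℝ) * y^j * (x+y)⁻¹^(a+j) * y⁻¹^b) * e4

lemma lemBR (p q A : ℕ) (hp : 2 ≤ p) (hq : 1 ≤ q) (hA1 : p ≤ A) (hA2 : A ≤ 2*p+q-2) :
    ∑ j ∈ Finset.range q, (-1:ℝ)^j * ((p+q-2-j).choose (q-1-j)) * ((p+j-1).choose j)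
        * ((A-1).choose (p+j-1))
      = if A ≤ 2*p-1 then ((A-1).choose (A-p) : ℝ) * ((q+2*p-2-A).choose (2*p-1-A)) else 0 := by
  have h := lemB p q A hp hq hA1 hA2
  have h2 := congrArg (fun z : ℤ => (z : ℝ)) h
  push_cast at h2
  exact h2

/-- The key reindexing identity: expansion of the alternating double sum. -/
lemma lemX (p q : ℕ) (hp : 2 ≤ p) (hq : 1 ≤ q) (X Z : ℝ) :
    ∑ ij ∈ Finset.HasAntidiagonal.antidiagonal (q-1), (-1:ℝ)^ij.2 * ((p+ij.1-1).choose ij.1)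
        * ((p+ij.2-1).choose ij.2)
        * ∑ s ∈ Finset.range (p+ij.1),
            ((p+ij.2-1+s).choose s : ℝ) * (X^(p+ij.1-s) * Z^(p+ij.2+s))
      = ∑ ij ∈ Finset.HasAntidiagonal.antidiagonal (p-1), ((p+ij.1-1).choose ij.1 : ℝ) * ((q+ij.2-1).choose ij.2)
          * (X^(q+ij.2) * Z^(p+ij.1)) := by
  rw [Finset.Nat.sum_antidiagonal_eq_sum_range_succ_mk, show (q-1).succ = q from by omega,
    ← Finset.sum_range_reflect]
  have stepE2 : ∀ j ∈ Finset.range q,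
      (-1:ℝ)^(q-1-(q-1-j)) * ((p+(q-1-j)-1).choose (q-1-j))
          * ((p+(q-1-(q-1-j))-1).choose (q-1-(q-1-j)))
          * ∑ s ∈ Finset.range (p+(q-1-j)),
              ((p+(q-1-(q-1-j))-1+s).choose s : ℝ)
                * (X^(p+(q-1-j)-s) * Z^(p+(q-1-(q-1-j))+s))
        = ∑ A ∈ Finset.Ico p (2*p+q-1),
            ((-1:ℝ)^j * ((p+q-2-j).choose (q-1-j)) * ((p+j-1).choose j)
              * ((A-1).choose (p+j-1))) * (X^(2*p+q-1-A) * Z^A) := by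
    intro j hj
    rw [Finset.mem_range] at hj
    have hjj : q-1-(q-1-j) = j := by omega
    rw [hjj]
    have h1 : ∑ A ∈ Finset.Ico (p+j) (2*p+q-1), ((A-1).choose (p+j-1) : ℝ) * (X^(2*p+q-1-A) * Z^A)
        = ∑ s ∈ Finset.range (p+(q-1-j)),
            ((p+j-1+s).choose s : ℝ) * (X^(p+(q-1-j)-s) * Z^(p+j+s)) := by
      rw [Finset.sum_Ico_eq_sum_range, show 2*p+q-1-(p+j) = p+(q-1-j) from by omega]
      apply Finset.sum_congr rfl
      intro s hs
      rw [Finset.mem_range] at hs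
      rw [show p+j+s-1 = p+j-1+s from by omega,
        Nat.choose_symm_of_eq_add (show p+j-1+s = (p+j-1)+s from rfl),
        show 2*p+q-1-(p+j+s) = p+(q-1-j)-s from by omega]
    have h2 : ∑ A ∈ Finset.Ico p (2*p+q-1), ((A-1).choose (p+j-1) : ℝ) * (X^(2*p+q-1-A) * Z^A)
        = ∑ A ∈ Finset.Ico (p+j) (2*p+q-1), ((A-1).choose (p+j-1) : ℝ) * (X^(2*p+q-1-A) * Z^A) := by
      symm
      apply Finset.sum_subset (Finset.Ico_subset_Ico (by omega) le_rfl)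
      intro A hA hA2
      rw [Finset.mem_Ico] at hA
      rw [Finset.mem_Ico, not_and_or] at hA2
      have : A < p + j := by omega
      rw [Nat.choose_eq_zero_of_lt (by omega : A-1 < p+j-1)]
      simp
    rw [show p+(q-1-j)-1 = p+q-2-j from by omega]
    rw [← h1, ← h2, Finset.mul_sum]
    apply Finset.sum_congr rfl
    intro A _
    ring
  rw [Finset.sum_congr rfl stepE2, Finset.sum_comm]
  have stepE3 : ∀ A ∈ Finset.Ico p (2*p+q-1),
      ∑ j ∈ Finset.range q,
          ((-1:ℝ)^j * ((p+q-2-j).choose (q-1-j)) * ((p+j-1).choose j)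
            * ((A-1).choose (p+j-1))) * (X^(2*p+q-1-A) * Z^A)
        = (if A ≤ 2*p-1 then ((A-1).choose (A-p) : ℝ) * ((q+2*p-2-A).choose (2*p-1-A)) else 0)
            * (X^(2*p+q-1-A) * Z^A) := by
    intro A hA
    rw [Finset.mem_Ico] at hA
    rw [← Finset.sum_mul, lemBR p q A hp hq hA.1 (by omega)]
  rw [Finset.sum_congr rfl stepE3]
  have stepE4 : ∑ A ∈ Finset.Ico p (2*p+q-1),
      (if A ≤ 2*p-1 then ((A-1).choose (A-p) : ℝ) * ((q+2*p-2-A).choose (2*p-1-A)) else 0)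
          * (X^(2*p+q-1-A) * Z^A)
      = ∑ A ∈ Finset.Ico p (2*p),
          (((A-1).choose (A-p) : ℝ) * ((q+2*p-2-A).choose (2*p-1-A))) * (X^(2*p+q-1-A) * Z^A) := by
    rw [← Finset.sum_filter_add_sum_filter_not (Finset.Ico p (2*p+q-1)) (fun A => A ≤ 2*p-1)]
    have hfil : Finset.filter (fun A => A ≤ 2*p-1) (Finset.Ico p (2*p+q-1)) = Finset.Ico p (2*p) := by
      ext A
      simp only [Finset.mem_filter, Finset.mem_Ico]
      omega
    have e1 : ∑ A ∈ Finset.filter (fun A => A ≤ 2*p-1) (Finset.Ico p (2*p+q-1)),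
        (if A ≤ 2*p-1 then ((A-1).choose (A-p) : ℝ) * ((q+2*p-2-A).choose (2*p-1-A)) else 0)
          * (X^(2*p+q-1-A) * Z^A)
        = ∑ A ∈ Finset.Ico p (2*p),
            (((A-1).choose (A-p) : ℝ) * ((q+2*p-2-A).choose (2*p-1-A))) * (X^(2*p+q-1-A) * Z^A) := by
      rw [hfil]
      apply Finset.sum_congr rfl
      intro A hA
      rw [Finset.mem_Ico] at hA
      rw [if_pos (by omega : A ≤ 2*p-1)]
    have e2 : ∑ A ∈ Finset.filter (fun A => ¬ A ≤ 2*p-1) (Finset.Ico p (2*p+q-1)),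
        (if A ≤ 2*p-1 then ((A-1).choose (A-p) : ℝ) * ((q+2*p-2-A).choose (2*p-1-A)) else 0)
          * (X^(2*p+q-1-A) * Z^A) = 0 := by
      apply Finset.sum_eq_zero
      intro A hA
      rw [Finset.mem_filter] at hA
      rw [if_neg hA.2]
      ring
    rw [e1, e2, add_zero]
  rw [stepE4]
  rw [Finset.Nat.sum_antidiagonal_eq_sum_range_succ_mk, show (p-1).succ = p from by omega]
  rw [Finset.sum_Ico_eq_sum_range, show 2*p-p = p from by omega]
  apply Finset.sum_congr rfl
  intro k hk
  rw [Finset.mem_range] at hk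
  rw [show p+k-p = k from by omega, show p+k-1 = p+k-1 from rfl,
    show q+2*p-2-(p+k) = q+(p-1-k)-1 from by omega,
    show 2*p-1-(p+k) = p-1-k from by omega,
    show 2*p+q-1-(p+k) = q+(p-1-k) from by omega]

/-- The pointwise partial-fraction identity for q odd. -/
lemma lemDagger (p q : ℕ) (hp : 2 ≤ p) (hqo : Odd q) (x y : ℝ) (hx : 0 < x) (hy : 0 < y) :
    ∑ ij ∈ Finset.HasAntidiagonal.antidiagonal (q-1), (-1:ℝ)^ij.2 * ((p+ij.1-1).choose ij.1)
        * ((p+ij.2-1).choose ij.2) * (x⁻¹^(p+ij.1) * y⁻¹^(p+ij.2))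
      = ∑ ij ∈ Finset.HasAntidiagonal.antidiagonal (p-1), ((p+ij.1-1).choose ij.1 : ℝ) * ((q+ij.2-1).choose ij.2)
          * ((x⁻¹^(q+ij.2) + y⁻¹^(q+ij.2)) * (x+y)⁻¹^(p+ij.1)) := by
  have hq : 1 ≤ q := hqo.pos
  have expand : ∀ ij ∈ Finset.HasAntidiagonal.antidiagonal (q-1),
      (-1:ℝ)^ij.2 * ((p+ij.1-1).choose ij.1) * ((p+ij.2-1).choose ij.2)
          * (x⁻¹^(p+ij.1) * y⁻¹^(p+ij.2))
        = ((-1:ℝ)^ij.2 * ((p+ij.1-1).choose ij.1) * ((p+ij.2-1).choose ij.2)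
            * ∑ s ∈ Finset.range (p+ij.1),
                ((p+ij.2-1+s).choose s : ℝ) * (x⁻¹^(p+ij.1-s) * (x+y)⁻¹^(p+ij.2+s)))
          + ((-1:ℝ)^ij.2 * ((p+ij.1-1).choose ij.1) * ((p+ij.2-1).choose ij.2)
            * ∑ s ∈ Finset.range (p+ij.2),
                ((p+ij.1-1+s).choose s : ℝ) * (y⁻¹^(p+ij.2-s) * (x+y)⁻¹^(p+ij.1+s))) := by
    intro ij _
    rw [lemPFreal (p+ij.1) (p+ij.2) (by omega) (by omega) x y hx hy, mul_add]
  rw [Finset.sum_congr rfl expand, Finset.sum_add_distrib]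
  have part1 := lemX p q hp hq x⁻¹ (x+y)⁻¹
  rw [part1]
  have part2 : ∑ ij ∈ Finset.HasAntidiagonal.antidiagonal (q-1),
      ((-1:ℝ)^ij.2 * ((p+ij.1-1).choose ij.1) * ((p+ij.2-1).choose ij.2)
        * ∑ s ∈ Finset.range (p+ij.2),
            ((p+ij.1-1+s).choose s : ℝ) * (y⁻¹^(p+ij.2-s) * (x+y)⁻¹^(p+ij.1+s)))
      = ∑ ij ∈ Finset.HasAntidiagonal.antidiagonal (p-1), ((p+ij.1-1).choose ij.1 : ℝ) * ((q+ij.2-1).choose ij.2)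
          * (y⁻¹^(q+ij.2) * (x+y)⁻¹^(p+ij.1)) := by
    rw [← lemX p q hp hq y⁻¹ (x+y)⁻¹]
    conv_lhs => rw [← Finset.HasAntidiagonal.map_swap_antidiagonal]
    rw [Finset.sum_map]
    apply Finset.sum_congr rfl
    intro ij hij
    rw [Finset.HasAntidiagonal.mem_antidiagonal] at hij
    simp only [Function.Embedding.coeFn_mk, Prod.fst_swap, Prod.snd_swap]
    have hsign : (-1:ℝ)^ij.1 = (-1:ℝ)^ij.2 := by
      rcases Nat.even_or_odd ij.2 with h2 | h2
      · have h1 : Even ij.1 := by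
          rcases hqo with ⟨m, hm⟩
          rcases h2 with ⟨l, hl⟩
          exact ⟨(ij.1)/2, by omega⟩
        rw [h1.neg_one_pow, h2.neg_one_pow]
      · have h1 : Odd ij.1 := by
          rcases hqo with ⟨m, hm⟩
          rcases h2 with ⟨l, hl⟩
          exact ⟨(ij.1-1)/2, by omega⟩
        rw [h1.neg_one_pow, h2.neg_one_pow]
    rw [hsign]
    ring
  rw [part2, ← Finset.sum_add_distrib]
  apply Finset.sum_congr rfl
  intro ij _
  ring

/-- Positive rearrangement of `lemDagger`. -/
lemma lemDaggerPos (p q : ℕ) (hp : 2 ≤ p) (hqo : Odd q) (x y : ℝ) (hx : 0 < x) (hy : 0 < y) :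
    (∑ ij ∈ Finset.HasAntidiagonal.antidiagonal (p-1), ((p+ij.1-1).choose ij.1 : ℝ) * ((q+ij.2-1).choose ij.2)
          * ((x⁻¹^(q+ij.2) + y⁻¹^(q+ij.2)) * (x+y)⁻¹^(p+ij.1)))
      + ∑ ij ∈ (Finset.HasAntidiagonal.antidiagonal (q-1)).filter (fun ij => ij.2 % 2 = 1),
          ((p+ij.1-1).choose ij.1 : ℝ) * ((p+ij.2-1).choose ij.2)
            * (x⁻¹^(p+ij.1) * y⁻¹^(p+ij.2))
      = ∑ ij ∈ (Finset.HasAntidiagonal.antidiagonal (q-1)).filter (fun ij => ij.2 % 2 = 0),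
          ((p+ij.1-1).choose ij.1 : ℝ) * ((p+ij.2-1).choose ij.2)
            * (x⁻¹^(p+ij.1) * y⁻¹^(p+ij.2)) := by
  have hd := lemDagger p q hp hqo x y hx hy
  rw [← Finset.sum_filter_add_sum_filter_not (Finset.HasAntidiagonal.antidiagonal (q-1))
      (fun ij => ij.2 % 2 = 0)] at hd
  have he : ∑ ij ∈ (Finset.HasAntidiagonal.antidiagonal (q-1)).filter (fun ij => ij.2 % 2 = 0),
      (-1:ℝ)^ij.2 * ((p+ij.1-1).choose ij.1) * ((p+ij.2-1).choose ij.2)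
        * (x⁻¹^(p+ij.1) * y⁻¹^(p+ij.2))
      = ∑ ij ∈ (Finset.HasAntidiagonal.antidiagonal (q-1)).filter (fun ij => ij.2 % 2 = 0),
          ((p+ij.1-1).choose ij.1 : ℝ) * ((p+ij.2-1).choose ij.2)
            * (x⁻¹^(p+ij.1) * y⁻¹^(p+ij.2)) := by
    apply Finset.sum_congr rfl
    intro ij hij
    rw [Finset.mem_filter] at hij
    have : Even ij.2 := Nat.even_iff.2 hij.2
    rw [this.neg_one_pow]
    ring
  have hfo : (Finset.HasAntidiagonal.antidiagonal (q-1)).filter (fun ij : ℕ × ℕ => ¬ ij.2 % 2 = 0)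
      = (Finset.HasAntidiagonal.antidiagonal (q-1)).filter (fun ij => ij.2 % 2 = 1) := by
    apply Finset.filter_congr
    intro ij _
    omega
  have ho : ∑ ij ∈ (Finset.HasAntidiagonal.antidiagonal (q-1)).filter (fun ij => ¬ ij.2 % 2 = 0),
      (-1:ℝ)^ij.2 * ((p+ij.1-1).choose ij.1) * ((p+ij.2-1).choose ij.2)
        * (x⁻¹^(p+ij.1) * y⁻¹^(p+ij.2))
      = - ∑ ij ∈ (Finset.HasAntidiagonal.antidiagonal (q-1)).filter (fun ij => ij.2 % 2 = 1),
          ((p+ij.1-1).choose ij.1 : ℝ) * ((p+ij.2-1).choose ij.2)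
            * (x⁻¹^(p+ij.1) * y⁻¹^(p+ij.2)) := by
    rw [hfo, ← Finset.sum_neg_distrib]
    apply Finset.sum_congr rfl
    intro ij hij
    rw [Finset.mem_filter] at hij
    have : Odd ij.2 := Nat.odd_iff.2 hij.2
    rw [this.neg_one_pow]
    ring
  rw [he, ho] at hd
  linarith [hd]



open scoped ENNReal

/-- ENNReal version of the odd harmonic-type sum. -/
noncomputable def tE (a : ℕ) : ℝ≥0∞ :=
  ∑' n : {n : ℕ // 0 < n ∧ n % 2 = 1}, ENNReal.ofReal ((n.1:ℝ)⁻¹^a)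

/-- ENNReal version of the double T-type sum. -/
noncomputable def uE (a b : ℕ) : ℝ≥0∞ :=
  ∑' pr : {pr : ℕ × ℕ // pr.2 < pr.1 ∧ 0 < pr.2 ∧ pr.1 % 2 = 0 ∧ pr.2 % 2 = 1},
    ENNReal.ofReal ((pr.1.1:ℝ)⁻¹^a * (pr.1.2:ℝ)⁻¹^b)

lemma T1_eq (a : ℕ) : T1 a = 2 * (tE a).toReal := by
  unfold T1 tE
  congr 1
  rw [ENNReal.tsum_toReal_eq (fun _ => ENNReal.ofReal_ne_top)]
  apply tsum_congr
  intro n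
  rw [ENNReal.toReal_ofReal (by positivity)]
  simp [one_div, inv_pow]

lemma T2_eq (a b : ℕ) : T2 a b = 4 * (uE a b).toReal := by
  unfold T2 uE
  congr 1
  rw [ENNReal.tsum_toReal_eq (fun _ => ENNReal.ofReal_ne_top)]
  apply tsum_congr
  intro pr
  rw [ENNReal.toReal_ofReal (by positivity)]
  simp [one_div, inv_pow, mul_inv]
  ring

lemma tE_ne_top {a : ℕ} (ha : 2 ≤ a) : tE a ≠ ⊤ := by
  have h1 : tE a ≤ ∑' n : ℕ, ENNReal.ofReal ((n:ℝ)⁻¹^a) :=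
    ENNReal.tsum_comp_le_tsum_of_injective Subtype.val_injective _
  have h2 : Summable (fun n : ℕ => (n:ℝ)⁻¹^a) := by
    have := Real.summable_one_div_nat_pow.2 (by omega : 1 < a)
    simpa [one_div, inv_pow] using this
  have h3 : ∑' n : ℕ, ENNReal.ofReal ((n:ℝ)⁻¹^a) = ENNReal.ofReal (∑' n : ℕ, (n:ℝ)⁻¹^a) :=
    (ENNReal.ofReal_tsum_of_nonneg (fun n => by positivity) h2).symm
  exact ne_top_of_le_ne_top (by rw [h3]; exact ENNReal.ofReal_ne_top) h1

lemma tsum_oo_mul (a b : ℕ) :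
    ∑' mn : {n : ℕ // 0 < n ∧ n % 2 = 1} × {n : ℕ // 0 < n ∧ n % 2 = 1},
      ENNReal.ofReal ((mn.1.1:ℝ)⁻¹^a * (mn.2.1:ℝ)⁻¹^b) = tE a * tE b := by
  rw [ENNReal.tsum_prod']
  have step : ∀ m : {n : ℕ // 0 < n ∧ n % 2 = 1},
      ∑' n : {n : ℕ // 0 < n ∧ n % 2 = 1}, ENNReal.ofReal ((m.1:ℝ)⁻¹^a * (n.1:ℝ)⁻¹^b)
        = ENNReal.ofReal ((m.1:ℝ)⁻¹^a) * tE b := by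
    intro m
    unfold tE
    rw [← ENNReal.tsum_mul_left]
    apply tsum_congr
    intro n
    rw [ENNReal.ofReal_mul (by positivity)]
  rw [tsum_congr step]
  unfold tE
  rw [ENNReal.tsum_mul_right]

/-- The bijection between pairs of odd numbers and (even > odd) pairs. -/
noncomputable def oddPairEquiv : {n : ℕ // 0 < n ∧ n % 2 = 1} × {n : ℕ // 0 < n ∧ n % 2 = 1} ≃
    {pr : ℕ × ℕ // pr.2 < pr.1 ∧ 0 < pr.2 ∧ pr.1 % 2 = 0 ∧ pr.2 % 2 = 1} where
  toFun mn := ⟨(mn.1.1 + mn.2.1, mn.1.1), by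
    obtain ⟨⟨m, hm⟩, ⟨n, hn⟩⟩ := mn
    refine ⟨by simp; omega, by simp; omega, by simp; omega, by simp; omega⟩⟩
  invFun e := (⟨e.1.2, e.2.2.1, e.2.2.2.2⟩,
               ⟨e.1.1 - e.1.2, by omega, by omega⟩)
  left_inv := by
    rintro ⟨⟨m, hm⟩, ⟨n, hn⟩⟩
    simp
  right_inv := by
    rintro ⟨⟨N, k⟩, h⟩
    simp
    omega



lemma tsum_oo_U (a b : ℕ) :
    ∑' mn : {n : ℕ // 0 < n ∧ n % 2 = 1} × {n : ℕ // 0 < n ∧ n % 2 = 1},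
      ENNReal.ofReal (((mn.1.1:ℝ) + (mn.2.1:ℝ))⁻¹^a * (mn.1.1:ℝ)⁻¹^b) = uE a b := by
  unfold uE
  rw [← Equiv.tsum_eq oddPairEquiv
    (fun e => ENNReal.ofReal ((e.1.1:ℝ)⁻¹^a * (e.1.2:ℝ)⁻¹^b))]
  apply tsum_congr
  intro mn
  simp only [oddPairEquiv, Equiv.coe_fn_mk]
  norm_cast

lemma tsum_oo_U' (a b : ℕ) :
    ∑' mn : {n : ℕ // 0 < n ∧ n % 2 = 1} × {n : ℕ // 0 < n ∧ n % 2 = 1},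
      ENNReal.ofReal (((mn.1.1:ℝ) + (mn.2.1:ℝ))⁻¹^a * (mn.2.1:ℝ)⁻¹^b) = uE a b := by
  rw [← tsum_oo_U a b]
  rw [← Equiv.tsum_eq (Equiv.prodComm _ _)
    (fun mn : {n : ℕ // 0 < n ∧ n % 2 = 1} × {n : ℕ // 0 < n ∧ n % 2 = 1} =>
      ENNReal.ofReal (((mn.1.1:ℝ) + (mn.2.1:ℝ))⁻¹^a * (mn.1.1:ℝ)⁻¹^b))]
  apply tsum_congr
  intro mn
  simp only [Equiv.prodComm_apply, Prod.fst_swap, Prod.snd_swap]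
  rw [add_comm]

lemma tsum_term_tt (c : ℝ) (hc : 0 ≤ c) (A B : ℕ) :
    ∑' mn : {n : ℕ // 0 < n ∧ n % 2 = 1} × {n : ℕ // 0 < n ∧ n % 2 = 1},
      ENNReal.ofReal (c * ((mn.1.1:ℝ)⁻¹^A * (mn.2.1:ℝ)⁻¹^B))
      = ENNReal.ofReal c * (tE A * tE B) := by
  rw [← tsum_oo_mul A B, ← ENNReal.tsum_mul_left]
  apply tsum_congr
  intro mn
  rw [ENNReal.ofReal_mul hc]

lemma tsum_term_u (c : ℝ) (hc : 0 ≤ c) (A B : ℕ) :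
    ∑' mn : {n : ℕ // 0 < n ∧ n % 2 = 1} × {n : ℕ // 0 < n ∧ n % 2 = 1},
      ENNReal.ofReal (c * (((mn.1.1:ℝ)⁻¹^B + (mn.2.1:ℝ)⁻¹^B) * ((mn.1.1:ℝ)+(mn.2.1:ℝ))⁻¹^A))
      = ENNReal.ofReal c * (2 * uE A B) := by
  have split : ∀ mn : {n : ℕ // 0 < n ∧ n % 2 = 1} × {n : ℕ // 0 < n ∧ n % 2 = 1},
      ENNReal.ofReal (c * (((mn.1.1:ℝ)⁻¹^B + (mn.2.1:ℝ)⁻¹^B) * ((mn.1.1:ℝ)+(mn.2.1:ℝ))⁻¹^A))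
        = ENNReal.ofReal c * ENNReal.ofReal (((mn.1.1:ℝ)+(mn.2.1:ℝ))⁻¹^A * (mn.1.1:ℝ)⁻¹^B)
          + ENNReal.ofReal c * ENNReal.ofReal (((mn.1.1:ℝ)+(mn.2.1:ℝ))⁻¹^A * (mn.2.1:ℝ)⁻¹^B) := by
    intro mn
    have e : c * (((mn.1.1:ℝ)⁻¹^B + (mn.2.1:ℝ)⁻¹^B) * ((mn.1.1:ℝ)+(mn.2.1:ℝ))⁻¹^A)
        = c * (((mn.1.1:ℝ)+(mn.2.1:ℝ))⁻¹^A * (mn.1.1:ℝ)⁻¹^B)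
          + c * (((mn.1.1:ℝ)+(mn.2.1:ℝ))⁻¹^A * (mn.2.1:ℝ)⁻¹^B) := by ring
    rw [e, ENNReal.ofReal_add (by positivity) (by positivity),
      ENNReal.ofReal_mul hc, ENNReal.ofReal_mul hc]
  rw [tsum_congr split, ENNReal.tsum_add, ENNReal.tsum_mul_left, ENNReal.tsum_mul_left,
    tsum_oo_U, tsum_oo_U']
  ring

lemma mainENN (p q : ℕ) (hp : 2 ≤ p) (hqo : Odd q) :
    (∑ ij ∈ Finset.HasAntidiagonal.antidiagonal (p-1),
        ENNReal.ofReal (((p+ij.1-1).choose ij.1 : ℝ) * ((q+ij.2-1).choose ij.2))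
          * (2 * uE (p+ij.1) (q+ij.2)))
      + ∑ ij ∈ (Finset.HasAntidiagonal.antidiagonal (q-1)).filter (fun ij => ij.2 % 2 = 1),
          ENNReal.ofReal (((p+ij.1-1).choose ij.1 : ℝ) * ((p+ij.2-1).choose ij.2))
            * (tE (p+ij.1) * tE (p+ij.2))
      = ∑ ij ∈ (Finset.HasAntidiagonal.antidiagonal (q-1)).filter (fun ij => ij.2 % 2 = 0),
          ENNReal.ofReal (((p+ij.1-1).choose ij.1 : ℝ) * ((p+ij.2-1).choose ij.2))
            * (tE (p+ij.1) * tE (p+ij.2)) := by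
  have sum1 : ∑ ij ∈ Finset.HasAntidiagonal.antidiagonal (p-1),
      ENNReal.ofReal (((p+ij.1-1).choose ij.1 : ℝ) * ((q+ij.2-1).choose ij.2))
        * (2 * uE (p+ij.1) (q+ij.2))
      = ∑' mn : {n : ℕ // 0 < n ∧ n % 2 = 1} × {n : ℕ // 0 < n ∧ n % 2 = 1},
          ENNReal.ofReal (∑ ij ∈ Finset.HasAntidiagonal.antidiagonal (p-1),
            ((p+ij.1-1).choose ij.1 : ℝ) * ((q+ij.2-1).choose ij.2)
              * (((mn.1.1:ℝ)⁻¹^(q+ij.2) + (mn.2.1:ℝ)⁻¹^(q+ij.2))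
                  * ((mn.1.1:ℝ)+(mn.2.1:ℝ))⁻¹^(p+ij.1))) := by
    rw [tsum_congr (fun mn => ENNReal.ofReal_sum_of_nonneg (fun ij _ => by positivity)),
      Summable.tsum_finsetSum (fun ij _ => ENNReal.summable)]
    apply Finset.sum_congr rfl
    intro ij _
    rw [tsum_term_u _ (by positivity) (p+ij.1) (q+ij.2)]
  have sum2 : ∀ (s : Finset (ℕ × ℕ)),
      ∑ ij ∈ s, ENNReal.ofReal (((p+ij.1-1).choose ij.1 : ℝ) * ((p+ij.2-1).choose ij.2))
        * (tE (p+ij.1) * tE (p+ij.2))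
      = ∑' mn : {n : ℕ // 0 < n ∧ n % 2 = 1} × {n : ℕ // 0 < n ∧ n % 2 = 1},
          ENNReal.ofReal (∑ ij ∈ s,
            ((p+ij.1-1).choose ij.1 : ℝ) * ((p+ij.2-1).choose ij.2)
              * ((mn.1.1:ℝ)⁻¹^(p+ij.1) * (mn.2.1:ℝ)⁻¹^(p+ij.2))) := by
    intro s
    rw [tsum_congr (fun mn => ENNReal.ofReal_sum_of_nonneg (fun ij _ => by positivity)),
      Summable.tsum_finsetSum (fun ij _ => ENNReal.summable)]
    apply Finset.sum_congr rfl
    intro ij _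
    rw [tsum_term_tt _ (by positivity) (p+ij.1) (p+ij.2)]
  rw [sum1, sum2, sum2, ← ENNReal.tsum_add]
  apply tsum_congr
  intro mn
  rw [← ENNReal.ofReal_add (by positivity) (by positivity)]
  have hx : (0:ℝ) < (mn.1.1:ℝ) := by exact_mod_cast mn.1.2.1
  have hy : (0:ℝ) < (mn.2.1:ℝ) := by exact_mod_cast mn.2.2.1
  rw [lemDaggerPos p q hp hqo _ _ hx hy]



lemma vanish (p q : ℕ) (hp : 2 ≤ p) (hq : 0 < q) (hq2 : q % 2 = 0) :
    ∑ ij ∈ Finset.HasAntidiagonal.antidiagonal (q-1),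
        (-1:ℝ)^ij.2 * ((p+ij.1-1).choose ij.1) * ((p+ij.2-1).choose ij.2)
          * T1 (p+ij.1) * T1 (p+ij.2) = 0 := by
  have h : ∑ ij ∈ Finset.HasAntidiagonal.antidiagonal (q-1),
      (-1:ℝ)^ij.2 * ((p+ij.1-1).choose ij.1) * ((p+ij.2-1).choose ij.2)
        * T1 (p+ij.1) * T1 (p+ij.2)
      = - ∑ ij ∈ Finset.HasAntidiagonal.antidiagonal (q-1),
          (-1:ℝ)^ij.2 * ((p+ij.1-1).choose ij.1) * ((p+ij.2-1).choose ij.2)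
            * T1 (p+ij.1) * T1 (p+ij.2) := by
    conv_lhs => rw [← Finset.HasAntidiagonal.map_swap_antidiagonal]
    rw [Finset.sum_map, ← Finset.sum_neg_distrib]
    apply Finset.sum_congr rfl
    intro ij hij
    rw [Finset.HasAntidiagonal.mem_antidiagonal] at hij
    simp only [Function.Embedding.coeFn_mk, Prod.fst_swap, Prod.snd_swap]
    rcases Nat.even_or_odd ij.2 with h2 | h2
    · have h1 : Odd ij.1 := by
        rcases h2 with ⟨l, hl⟩
        exact ⟨(ij.1-1)/2, by omega⟩
      rw [h1.neg_one_pow, h2.neg_one_pow]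
      ring
    · have h1 : Even ij.1 := by
        rcases h2 with ⟨l, hl⟩
        exact ⟨ij.1/2, by omega⟩
      rw [h1.neg_one_pow, h2.neg_one_pow]
      ring
  linarith

theorem stmt18 (q p : ℕ) (hq : 0 < q) (hp : 2 ≤ p) :
    (1 - (-1 : ℝ) ^ q) *
        ∑ ij ∈ Finset.HasAntidiagonal.antidiagonal (p - 1),
          (Nat.choose (p + ij.1 - 1) ij.1 : ℝ) * (Nat.choose (q + ij.2 - 1) ij.2) *
            T2 (p + ij.1) (q + ij.2) =
      ∑ ij ∈ Finset.HasAntidiagonal.antidiagonal (q - 1),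
        (-1 : ℝ) ^ ij.2 * (Nat.choose (p + ij.1 - 1) ij.1) *
          (Nat.choose (p + ij.2 - 1) ij.2) * T1 (p + ij.1) * T1 (p + ij.2) ∧
    (q % 2 = 0 →
      (∑ ij ∈ Finset.HasAntidiagonal.antidiagonal (q - 1),
        (-1 : ℝ) ^ ij.2 * (Nat.choose (p + ij.1 - 1) ij.1) *
          (Nat.choose (p + ij.2 - 1) ij.2) * T1 (p + ij.1) * T1 (p + ij.2)) = 0) := by
  constructor
  · rcases Nat.even_or_odd q with hqe | hqo
    · rw [hqe.neg_one_pow, vanish p q hp hq (Nat.even_iff.1 hqe)]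
      ring
    · -- the main case : q odd
      have hq1 : 1 ≤ q := hq
      -- finiteness bookkeeping
      have hne_tt : ∀ (s : Finset (ℕ × ℕ)), ∀ ij ∈ s,
          ENNReal.ofReal (((p+ij.1-1).choose ij.1 : ℝ) * ((p+ij.2-1).choose ij.2))
            * (tE (p+ij.1) * tE (p+ij.2)) ≠ ⊤ := fun s ij _ =>
        ENNReal.mul_ne_top ENNReal.ofReal_ne_top
          (ENNReal.mul_ne_top (tE_ne_top (by omega)) (tE_ne_top (by omega)))
      have main := mainENN p q hp hqo
      have hR_ne : (∑ ij ∈ (Finset.HasAntidiagonal.antidiagonal (q-1)).filter (fun ij => ij.2 % 2 = 0),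
          ENNReal.ofReal (((p+ij.1-1).choose ij.1 : ℝ) * ((p+ij.2-1).choose ij.2))
            * (tE (p+ij.1) * tE (p+ij.2))) ≠ ⊤ :=
        ENNReal.sum_ne_top.2 (hne_tt _)
      have hO_ne : (∑ ij ∈ (Finset.HasAntidiagonal.antidiagonal (q-1)).filter (fun ij => ij.2 % 2 = 1),
          ENNReal.ofReal (((p+ij.1-1).choose ij.1 : ℝ) * ((p+ij.2-1).choose ij.2))
            * (tE (p+ij.1) * tE (p+ij.2))) ≠ ⊤ :=
        ENNReal.sum_ne_top.2 (hne_tt _)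
      have hsum1_ne : (∑ ij ∈ Finset.HasAntidiagonal.antidiagonal (p-1),
          ENNReal.ofReal (((p+ij.1-1).choose ij.1 : ℝ) * ((q+ij.2-1).choose ij.2))
            * (2 * uE (p+ij.1) (q+ij.2))) ≠ ⊤ := by
        have hle : (∑ ij ∈ Finset.HasAntidiagonal.antidiagonal (p-1),
            ENNReal.ofReal (((p+ij.1-1).choose ij.1 : ℝ) * ((q+ij.2-1).choose ij.2))
              * (2 * uE (p+ij.1) (q+ij.2))) ≤
            ∑ ij ∈ (Finset.HasAntidiagonal.antidiagonal (q-1)).filter (fun ij => ij.2 % 2 = 0),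
              ENNReal.ofReal (((p+ij.1-1).choose ij.1 : ℝ) * ((p+ij.2-1).choose ij.2))
                * (tE (p+ij.1) * tE (p+ij.2)) := by
          rw [← main]
          exact le_self_add
        exact ne_top_of_le_ne_top hR_ne hle
      have huE_ne : ∀ ij ∈ Finset.HasAntidiagonal.antidiagonal (p-1), uE (p+ij.1) (q+ij.2) ≠ ⊤ := by
        intro ij hij
        have hterm := ENNReal.lt_top_of_sum_ne_top hsum1_ne hij
        intro htop
        rw [htop] at hterm
        have h2 : (2:ℝ≥0∞) * ⊤ = ⊤ := by simp
        have hcpos : (0:ℝ) < ((p+ij.1-1).choose ij.1 : ℝ) * ((q+ij.2-1).choose ij.2) := by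
          have c1 := Nat.choose_pos (show ij.1 ≤ p+ij.1-1 by omega)
          have c2 := Nat.choose_pos (show ij.2 ≤ q+ij.2-1 by omega)
          exact mul_pos (by exact_mod_cast c1) (by exact_mod_cast c2)
        rw [h2, ENNReal.mul_top (ENNReal.ofReal_pos.2 hcpos).ne'] at hterm
        exact absurd hterm (lt_irrefl _)
      -- take toReal of the main identity
      have RI := congrArg ENNReal.toReal main
      rw [ENNReal.toReal_add (ENNReal.sum_ne_top.2 (fun ij hij =>
            ENNReal.mul_ne_top ENNReal.ofReal_ne_top
              (ENNReal.mul_ne_top (by simp) (huE_ne ij hij)))) hO_ne,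
        ENNReal.toReal_sum (fun ij hij => ENNReal.mul_ne_top ENNReal.ofReal_ne_top
          (ENNReal.mul_ne_top (by simp) (huE_ne ij hij))),
        ENNReal.toReal_sum (hne_tt _), ENNReal.toReal_sum (hne_tt _)] at RI
      have hA : ∑ ij ∈ Finset.HasAntidiagonal.antidiagonal (p-1),
          (ENNReal.ofReal (((p+ij.1-1).choose ij.1 : ℝ) * ((q+ij.2-1).choose ij.2))
            * (2 * uE (p+ij.1) (q+ij.2))).toReal
          = 2 * ∑ ij ∈ Finset.HasAntidiagonal.antidiagonal (p-1),
              (((p+ij.1-1).choose ij.1 : ℝ) * ((q+ij.2-1).choose ij.2))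
                * (uE (p+ij.1) (q+ij.2)).toReal := by
        rw [Finset.mul_sum]
        apply Finset.sum_congr rfl
        intro ij _
        rw [ENNReal.toReal_mul, ENNReal.toReal_mul, ENNReal.toReal_ofReal (by positivity)]
        simp only [ENNReal.toReal_ofNat]
        ring
      have hB : ∀ (s : Finset (ℕ × ℕ)),
          ∑ ij ∈ s, (ENNReal.ofReal (((p+ij.1-1).choose ij.1 : ℝ) * ((p+ij.2-1).choose ij.2))
              * (tE (p+ij.1) * tE (p+ij.2))).toReal
            = ∑ ij ∈ s, (((p+ij.1-1).choose ij.1 : ℝ) * ((p+ij.2-1).choose ij.2))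
                * ((tE (p+ij.1)).toReal * (tE (p+ij.2)).toReal) := by
        intro s
        apply Finset.sum_congr rfl
        intro ij _
        rw [ENNReal.toReal_mul, ENNReal.toReal_mul, ENNReal.toReal_ofReal (by positivity)]
      rw [hA, hB, hB] at RI
      -- now RI is a real identity; transform the goal
      rw [hqo.neg_one_pow]
      have hL : ∑ ij ∈ Finset.HasAntidiagonal.antidiagonal (p-1),
          (Nat.choose (p + ij.1 - 1) ij.1 : ℝ) * (Nat.choose (q + ij.2 - 1) ij.2) *
            T2 (p + ij.1) (q + ij.2)
          = 4 * ∑ ij ∈ Finset.HasAntidiagonal.antidiagonal (p-1),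
              (((p+ij.1-1).choose ij.1 : ℝ) * ((q+ij.2-1).choose ij.2))
                * (uE (p+ij.1) (q+ij.2)).toReal := by
        rw [Finset.mul_sum]
        apply Finset.sum_congr rfl
        intro ij _
        rw [T2_eq]
        ring
      have hsplit : ∑ ij ∈ Finset.HasAntidiagonal.antidiagonal (q - 1),
          (-1 : ℝ) ^ ij.2 * (Nat.choose (p + ij.1 - 1) ij.1) *
            (Nat.choose (p + ij.2 - 1) ij.2) * T1 (p + ij.1) * T1 (p + ij.2)
          = (4 * ∑ ij ∈ (Finset.HasAntidiagonal.antidiagonal (q-1)).filter (fun ij => ij.2 % 2 = 0),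
              (((p+ij.1-1).choose ij.1 : ℝ) * ((p+ij.2-1).choose ij.2))
                * ((tE (p+ij.1)).toReal * (tE (p+ij.2)).toReal))
            - 4 * ∑ ij ∈ (Finset.HasAntidiagonal.antidiagonal (q-1)).filter (fun ij => ij.2 % 2 = 1),
                (((p+ij.1-1).choose ij.1 : ℝ) * ((p+ij.2-1).choose ij.2))
                  * ((tE (p+ij.1)).toReal * (tE (p+ij.2)).toReal) := by
        rw [← Finset.sum_filter_add_sum_filter_not (Finset.HasAntidiagonal.antidiagonal (q-1))
            (fun ij => ij.2 % 2 = 0)]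
        have hfo : (Finset.HasAntidiagonal.antidiagonal (q-1)).filter (fun ij : ℕ × ℕ => ¬ ij.2 % 2 = 0)
            = (Finset.HasAntidiagonal.antidiagonal (q-1)).filter (fun ij => ij.2 % 2 = 1) := by
          apply Finset.filter_congr
          intro ij _
          omega
        rw [hfo, Finset.mul_sum, Finset.mul_sum]
        have he : ∀ ij ∈ (Finset.HasAntidiagonal.antidiagonal (q-1)).filter (fun ij : ℕ × ℕ => ij.2 % 2 = 0),
            (-1 : ℝ) ^ ij.2 * (Nat.choose (p + ij.1 - 1) ij.1) *
              (Nat.choose (p + ij.2 - 1) ij.2) * T1 (p + ij.1) * T1 (p + ij.2)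
            = 4 * ((((p+ij.1-1).choose ij.1 : ℝ) * ((p+ij.2-1).choose ij.2))
                * ((tE (p+ij.1)).toReal * (tE (p+ij.2)).toReal)) := by
          intro ij hij
          rw [Finset.mem_filter] at hij
          rw [(Nat.even_iff.2 hij.2).neg_one_pow, T1_eq, T1_eq]
          ring
        have hodd : ∀ ij ∈ (Finset.HasAntidiagonal.antidiagonal (q-1)).filter (fun ij : ℕ × ℕ => ij.2 % 2 = 1),
            (-1 : ℝ) ^ ij.2 * (Nat.choose (p + ij.1 - 1) ij.1) *
              (Nat.choose (p + ij.2 - 1) ij.2) * T1 (p + ij.1) * T1 (p + ij.2)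
            = -(4 * ((((p+ij.1-1).choose ij.1 : ℝ) * ((p+ij.2-1).choose ij.2))
                * ((tE (p+ij.1)).toReal * (tE (p+ij.2)).toReal))) := by
          intro ij hij
          rw [Finset.mem_filter] at hij
          rw [(Nat.odd_iff.2 hij.2).neg_one_pow, T1_eq, T1_eq]
          ring
        rw [Finset.sum_congr rfl he, Finset.sum_congr rfl hodd]
        rw [Finset.sum_neg_distrib]
        ring
      rw [hL, hsplit]
      linarith [RI]
  · intro hq2
    exact vanish p q hp hq hq2
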